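/- Let n ≥ 2 and let ε be a rational number with 0 < ε < (2n−1)/(n(n+1)). Define θ⁻₁ = 1/n − ε and θ⁻ᵢ = 1/n + ε/(2n−1) for i = 2,…,2n. Then: (i) for every non-empty proper subset I ⊆ {1,…,2n}, ∑_{i∈I} θ⁻ᵢ ≠ 1; (ii) for every subset I ⊆ {1,…,2n}, ∑_{i∈I} θ⁻ᵢ > 1 if and only if |I| > n, or |I| = n and 1 ∉ I. -/

import Mathlib

/-! With δ = ε/(2n−1), every weight except the first equals 1/n + δ, and the first is smaller by
2nδ; so a subset of size k has weight k(1/n + δ), minus 2nδ if it contains the first index.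
Since δ > 0 and n(n−1)δ < 1, the perturbation kδ − 2nδ[1 ∈ I] never compensates for the distance
|k − n|/n of k/n from 1 when k ≠ n, and for k = n it has the sign of ±nδ. -/

open Finset

theorem Finset.sum_eq_card_nsmul_sub_ite {ι M : Type*} [DecidableEq ι] [AddCommGroup M]
    (s : Finset ι) (i₀ : ι) (a b : M) (f : ι → M) (hf : ∀ i, f i = if i = i₀ then b else a) :
    ∑ i ∈ s, f i = #s • a - if i₀ ∈ s then a - b else 0 := by
  calc ∑ i ∈ s, f i = ∑ i ∈ s, (a - if i = i₀ then a - b else 0) :=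
        sum_congr rfl fun i _ => by rw [hf]; split_ifs <;> abel
    _ = _ := by rw [sum_sub_distrib, sum_const, sum_ite_eq']

lemma ne_and_lt_iff_of_dichotomy {α : Type*} [Preorder α] {a x : α} {P : Prop}
    (h₁ : P → a < x) (h₂ : ¬P → x < a) : x ≠ a ∧ (a < x ↔ P) := by
  by_cases hP : P
  · exact ⟨(h₁ hP).ne', iff_of_true (h₁ hP) hP⟩
  · exact ⟨(h₂ hP).ne, iff_of_false (h₂ hP).not_gt hP⟩

section WeightSign

variable {K : Type*} [Field K] [LinearOrder K] [IsStrictOrderedRing K]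
  {n k : ℕ} {δ : K}

lemma one_lt_card_mul_of_le (hn : 0 < n) (hδ : 0 < δ) (hk : n ≤ k) :
    1 < k * (1 / n + δ) := by
  have hn' : (0 : K) < n := by exact_mod_cast hn
  calc (1 : K) < n * (1 / n + δ) := by field_simp; nlinarith
    _ ≤ k * (1 / n + δ) := by gcongr

lemma card_mul_lt_one_of_lt (hδ : 0 ≤ δ) (hδn : n * (n - 1) * δ < 1) (hk : k < n) :
    k * (1 / n + δ) < 1 := by
  have hn' : (0 : K) < n := by exact_mod_cast hk.trans_le' k.zero_le
  have hk' : (k : K) ≤ n - 1 := by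
    rw [le_sub_iff_add_le]; exact_mod_cast hk
  calc (k : K) * (1 / n + δ) ≤ (n - 1) * (1 / n + δ) := by gcongr
    _ < 1 := by field_simp; linarith

lemma one_lt_card_mul_sub_of_lt (hn : 0 < n) (hδ : 0 ≤ δ) (hδn : n * (n - 1) * δ < 1)
    (hk : n < k) :
    1 < k * (1 / n + δ) - 2 * n * δ := by
  have hn' : (0 : K) < n := by exact_mod_cast hn
  have hk' : (n : K) + 1 ≤ k := by exact_mod_cast hk
  calc (1 : K) < (n + 1) * (1 / n + δ) - 2 * n * δ := by field_simp; linarith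
    _ ≤ k * (1 / n + δ) - 2 * n * δ := by gcongr

lemma card_mul_sub_lt_one_of_le (hn : 0 < n) (hδ : 0 < δ) (hk : k ≤ n) :
    k * (1 / n + δ) - 2 * n * δ < 1 := by
  have hn' : (0 : K) < n := by exact_mod_cast hn
  calc (k : K) * (1 / n + δ) - 2 * n * δ ≤ n * (1 / n + δ) - 2 * n * δ := by gcongr
    _ < 1 := by field_simp; nlinarith

lemma card_mul_sub_ite_ne_one_and_one_lt_iff (hn : 0 < n) (hδ : 0 < δ)
    (hδn : n * (n - 1) * δ < 1) (c : Prop) [Decidable c] :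
    k * (1 / n + δ) - (if c then 2 * n * δ else 0) ≠ 1 ∧
      (1 < k * (1 / n + δ) - (if c then 2 * n * δ else 0) ↔ n < k ∨ k = n ∧ ¬c) := by
  by_cases hc : c
  · simp only [hc, if_true, not_true_eq_false, and_false, or_false]
    exact ne_and_lt_iff_of_dichotomy (one_lt_card_mul_sub_of_lt hn hδ.le hδn)
      fun hk => card_mul_sub_lt_one_of_le hn hδ (not_lt.1 hk)
  · simp only [hc, if_false, sub_zero, not_false_eq_true, and_true]
    exact ne_and_lt_iff_of_dichotomy (fun hk => one_lt_card_mul_of_le hn hδ (by omega))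
      fun hk => card_mul_lt_one_of_lt hδ.le hδn (by omega)

end WeightSign

/-- Lemma 3.2 (θ⁻-part): with θ⁻₁ = 1/n − ε and θ⁻ᵢ = 1/n + ε/(2n−1) for i ≥ 2,
and 0 < ε < (2n−1)/(n(n+1)): (i) d = (1,…,1;2) is θ⁻-coprime, and (ii) a subset I
is θ⁻-forbidden iff |I| > n, or |I| = n and 1 ∉ I. -/
theorem stmt4 (n : ℕ) (hn : 2 ≤ n) (ε : ℚ) (hε0 : 0 < ε)
    (hε : ε < (2 * (n : ℚ) - 1) / ((n : ℚ) * ((n : ℚ) + 1)))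
    (θ : Fin (2 * n) → ℚ)
    (hθ : ∀ i : Fin (2 * n),
      θ i = if (i : ℕ) = 0 then 1 / (n : ℚ) - ε else 1 / (n : ℚ) + ε / (2 * (n : ℚ) - 1)) :
    (∀ I : Finset (Fin (2 * n)), I ≠ ∅ → I ≠ Finset.univ → ∑ i ∈ I, θ i ≠ 1) ∧
    (∀ I : Finset (Fin (2 * n)),
      1 < ∑ i ∈ I, θ i ↔
        (n < I.card ∨ (I.card = n ∧ (⟨0, by omega⟩ : Fin (2 * n)) ∉ I))) := by
  have hn0 : 0 < n := by omega
  have h2n : (0 : ℚ) < 2 * n - 1 := by linarith [show (2 : ℚ) ≤ n by exact_mod_cast hn]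
  set δ := ε / (2 * (n : ℚ) - 1) with hδ_def
  have hεδ : ε = (2 * n - 1) * δ := by rw [hδ_def]; field_simp
  have hδ : 0 < δ := div_pos hε0 h2n
  have hδn : n * (n - 1) * δ < 1 := by
    rw [lt_div_iff₀ (by positivity), hεδ] at hε
    nlinarith
  have hsum : ∀ I : Finset (Fin (2 * n)), ∑ i ∈ I, θ i =
      #I * (1 / n + δ) - if (⟨0, by omega⟩ : Fin (2 * n)) ∈ I then 2 * n * δ else 0 := by
    intro I
    rw [sum_eq_card_nsmul_sub_ite I ⟨0, by omega⟩ (1 / n + δ) (1 / n - ε) θ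
      fun i => by simp [hθ, Fin.ext_iff], nsmul_eq_mul, hεδ]
    ring_nf
  refine ⟨fun I _ _ => ?_, fun I => ?_⟩ <;> rw [hsum]
  · exact (card_mul_sub_ite_ne_one_and_one_lt_iff hn0 hδ hδn _).1
  · exact (card_mul_sub_ite_ne_one_and_one_lt_iff hn0 hδ hδn _).2
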